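/- Let a ∈ F_{2^n}^× and P = (x, y) a point on E: y² + xy = x³ + a over F_{2^n}. If Tr(x) = 0, λ is a solution of λ² + λ = x, x' = (y + x(λ+1))^{1/2} and y' = x'(x' + λ), then Q = (x', y') lies on E and [2]Q = P; conversely if P = [2]Q for some affine point Q then Tr(x) = 0. -/

import Mathlib

/-!
In characteristic 2 the tangent to `E` at `Q = (u, v)` with `u ≠ 0` has slope `λ = u + v/u`, and
`[2]Q` has abscissa `λ² + λ`. So the abscissa of a double is an Artin–Schreier value, whose
trace telescopes to `λ^(2^n) + λ = 0`. Conversely, the proposed `Q = (x', y')` has tangent slope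
`x' + y'/x' = λ`, so the duplication formulas return `(λ² + λ, x'² + x(λ + 1)) = (x, y)`.
-/

open WeierstrassCurve

/-- The curve `y² + xy = x³ + a` over a field. -/
def E2 {F : Type*} [Field F] (a : F) : WeierstrassCurve.Affine F :=
  { a₁ := 1, a₂ := 0, a₃ := 0, a₄ := 0, a₆ := a }

theorem sum_range_frobenius_sub_self_pow {R : Type*} [CommRing R] (p : ℕ) [Fact p.Prime]
    [CharP R p] (z : R) (n : ℕ) :
    ∑ i ∈ Finset.range n, (z ^ p - z) ^ p ^ i = z ^ p ^ n - z := by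
  have telescope (i : ℕ) : (z ^ p - z) ^ p ^ i = z ^ p ^ (i + 1) - z ^ p ^ i := by
    rw [sub_pow_char_pow, ← pow_mul, pow_succ']
  simp_rw [telescope]
  rw [Finset.sum_range_sub (fun i => z ^ p ^ i), pow_zero, pow_one]

theorem GaloisField.pow_card_eq_self (p : ℕ) [Fact p.Prime] {n : ℕ} (z : GaloisField p n) :
    z ^ p ^ n = z := by
  rcases eq_or_ne n 0 with rfl | hn
  · rw [pow_zero, pow_one]
  · have : Fintype (GaloisField p n) := Fintype.ofFinite _
    rw [← GaloisField.card p n hn, Nat.card_eq_fintype_card, FiniteField.pow_card]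

theorem GaloisField.sum_range_sq_add_self_pow_eq_zero {n : ℕ} (z : GaloisField 2 n) :
    ∑ i ∈ Finset.range n, (z ^ 2 + z) ^ 2 ^ i = 0 := by
  have := sum_range_frobenius_sub_self_pow 2 z n
  rwa [CharTwo.sub_eq_add, GaloisField.pow_card_eq_self, CharTwo.sub_eq_add,
    CharTwo.add_self_eq_zero] at this

namespace E2

variable {F : Type*} [Field F] {a : F}

theorem equation_iff {x y : F} : (E2 a).Equation x y ↔ y ^ 2 + x * y = x ^ 3 + a := by
  rw [Affine.equation_iff]
  simp only [E2]
  ring_nf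

variable [CharP F 2]

theorem negY_eq (x y : F) : (E2 a).negY x y = y + x := by
  simp only [Affine.negY, E2]
  grind

theorem Y_eq_negY_iff {x y : F} : y = (E2 a).negY x y ↔ x = 0 := by
  rw [negY_eq]
  grind

variable [DecidableEq F]

/-- `hlam` is the tangent slope `lam = u + v/u` with the denominator cleared. -/
theorem two_smul_some_eq_some_iff {u v x y lam : F} (hQ : (E2 a).Nonsingular u v)
    (hP : (E2 a).Nonsingular x y) (hu : u ≠ 0) (hlam : u * lam = u ^ 2 + v) :
    2 • Affine.Point.some _ _ hQ = Affine.Point.some _ _ hP ↔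
      x = lam ^ 2 + lam ∧ y = u ^ 2 + (lam ^ 2 + lam) * (lam + 1) := by
  have hv : v ≠ (E2 a).negY u v := Y_eq_negY_iff.not.mpr hu
  have hslope : (E2 a).slope u u v v = lam := by
    rw [Affine.slope_of_Y_ne rfl hv, negY_eq, div_eq_iff (by grind)]
    simp only [E2]
    grind
  rw [two_smul, Affine.Point.add_self_of_Y_ne hv, Affine.Point.some.injEq, hslope]
  simp only [Affine.addY, Affine.negAddY, Affine.addX, negY_eq]
  simp only [E2]
  constructor <;> rintro ⟨rfl, rfl⟩ <;> constructor <;> grind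

theorem ne_zero_of_two_smul_eq_some {u v x y : F} {hQ : (E2 a).Nonsingular u v}
    {hP : (E2 a).Nonsingular x y}
    (h : 2 • Affine.Point.some _ _ hQ = Affine.Point.some _ _ hP) : u ≠ 0 := by
  intro hu
  apply Affine.Point.some_ne_zero hP
  rw [← h, two_smul, Affine.Point.add_self_of_Y_eq (Y_eq_negY_iff.mpr hu)]

end E2

open Classical in
/-- Let `a ∈ 𝔽_{2^n}ˣ` and `P = (x, y)` on `E : y² + xy = x³ + a`.
If `Tr(x) = 0`, `lam` solves `lam² + lam = x`, `x' = (y + x(lam+1))^{1/2}` and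
`y' = x'(x' + lam)`, then `Q = (x', y')` lies on `E` and `[2]Q = P`; conversely if
`P = [2]Q` for some affine point `Q` then `Tr(x) = 0`. -/
theorem point_halving (n : ℕ) (a x y : GaloisField 2 n) (ha : a ≠ 0)
    (hP : (E2 a).Nonsingular x y) :
    (∀ lam x' y' : GaloisField 2 n,
      (∑ i ∈ Finset.range n, x ^ 2 ^ i) = 0 →
      lam ^ 2 + lam = x →
      x' ^ 2 = y + x * (lam + 1) →
      y' = x' * (x' + lam) →
      (E2 a).Equation x' y' ∧
        ∀ hQ : (E2 a).Nonsingular x' y',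
          2 • Affine.Point.some _ _ hQ = Affine.Point.some _ _ hP) ∧
    ((∃ (u v : GaloisField 2 n) (hQ : (E2 a).Nonsingular u v),
        2 • Affine.Point.some _ _ hQ = Affine.Point.some _ _ hP) →
      (∑ i ∈ Finset.range n, x ^ 2 ^ i) = 0) := by
  have hxy := E2.equation_iff.mp hP.1
  refine ⟨fun lam x' y' _ hlam hsqrt hy' => ?_, fun ⟨u, v, hQ, h2Q⟩ => ?_⟩
  · have hQeq : y' ^ 2 + x' * y' = x' ^ 3 + a := by grind
    refine ⟨E2.equation_iff.mpr hQeq, fun hQ => ?_⟩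
    -- `x' = 0` would force `y' = 0`, hence `a = 0`.
    have hx' : x' ≠ 0 := by grind
    rw [E2.two_smul_some_eq_some_iff (lam := lam) hQ hP hx' (by grind)]
    constructor <;> grind
  · have hu := E2.ne_zero_of_two_smul_eq_some h2Q
    have hlam : u * (u + v / u) = u ^ 2 + v := by field_simp
    rw [((E2.two_smul_some_eq_some_iff hQ hP hu hlam).mp h2Q).1]
    exact GaloisField.sum_range_sq_add_self_pow_eq_zero _
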